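/- Concentration of the diagonal normalization matrix. Under the pLSI model, suppose Nn·h_min/log(n) → ∞. Then with probability 1 − o(n^{-3}), |M(j,j) − M_0(j,j)| ≤ C·(Nn)^{-1/2}·√(h_j·log(n)) for all 1 ≤ j ≤ p. -/

import Mathlib

/-!
For a fixed word `j`, the `N n` indicators `1{X i m = j}` are independent Bernoulli variables
whose means add up to `N n M₀(j,j) ≤ N n h_j`, and `N n (M(j,j) - M₀(j,j))` is their centred sum.
Since `E e^{lY} ≤ exp ((l + l²) E Y)` for a Bernoulli `Y` and `|l| ≤ 1`, the Chernoff bound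
gives two-sided tails `2 exp (-t² / (4 N n h_j))` for `t ≤ 2 N n h_j`. At
`t = 6 √(N n h_j log n)`, admissible as soon as `N n h_min ≥ 9 log n`, this is `2 n⁻⁹`; a union
bound over the `p ≤ n` words leaves a failure probability of at most `2 n⁻⁸`.
-/

noncomputable section
open Filter MeasureTheory ProbabilityTheory Matrix Finset Real
open scoped Classical

namespace TopicModel

/-- Euclidean norm of a vector given by a function. -/
def enorm {m : Type*} [Fintype m] (x : m → ℝ) : ℝ := Real.sqrt (∑ i, (x i) ^ 2)

/-- ℓ¹-norm of a vector given by a function. -/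
def l1norm {m : Type*} [Fintype m] (x : m → ℝ) : ℝ := ∑ i, |x i|

/-- A probability (weight) vector: nonnegative entries summing to 1. -/
def IsProbVec {m : Type*} [Fintype m] (v : m → ℝ) : Prop :=
  (∀ i, 0 ≤ v i) ∧ ∑ i, v i = 1

/-- All columns of a matrix are probability vectors. -/
def ColsProb {p K : ℕ} (A : Matrix (Fin p) (Fin K) ℝ) : Prop :=
  ∀ k, IsProbVec fun j => A j k

/-- `h_j`: the ℓ¹ norm of the j-th row of `A`. -/
def rowL1 {p K : ℕ} (A : Matrix (Fin p) (Fin K) ℝ) (j : Fin p) : ℝ := ∑ k, |A j k|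

/-- The diagonal of `diag(n⁻¹ D 1_n)`. -/
def diagAvg {p n : ℕ} (D : Matrix (Fin p) (Fin n) ℝ) (j : Fin p) : ℝ :=
  (n : ℝ)⁻¹ * ∑ i, D j i

/-- `M^{-1/2} D` for a diagonal normalization `Mdg`. -/
def nrm {p n : ℕ} (D : Matrix (Fin p) (Fin n) ℝ) (Mdg : Fin p → ℝ) :
    Matrix (Fin p) (Fin n) ℝ :=
  Matrix.of fun j i => (Real.sqrt (Mdg j))⁻¹ * D j i

/-- Spectral norm of a (rectangular) matrix. -/
def specNorm {p n : ℕ} (B : Matrix (Fin p) (Fin n) ℝ) : ℝ :=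
  ⨆ x : {x : Fin n → ℝ // ∑ i, (x i) ^ 2 ≤ 1}, enorm (B *ᵥ x.1)

/-- A family of vectors is orthonormal. -/
def OrthonormalRows {K : ℕ} {p : Type*} [Fintype p] (u : Fin K → p → ℝ) : Prop :=
  ∀ k l, ∑ j, u k j * u l j = if k = l then (1 : ℝ) else 0

/-- `(lam k, u k)` are eigenpairs of `G`, with orthonormal eigenvectors. -/
def IsEigenPairs {p K : ℕ} (G : Matrix (Fin p) (Fin p) ℝ)
    (lam : Fin K → ℝ) (u : Fin K → Fin p → ℝ) : Prop :=
  OrthonormalRows u ∧ ∀ k, G *ᵥ u k = lam k • u k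

/-- `xi` consists of the `K` leading (unit-norm) eigenvectors of `G`: the first `K`
vectors of a full orthonormal eigenbasis whose eigenvalues are in decreasing order. -/
def LeadingEigenvectors {p K : ℕ} (hKp : K ≤ p) (G : Matrix (Fin p) (Fin p) ℝ)
    (xi : Fin K → Fin p → ℝ) : Prop :=
  ∃ (lam : Fin p → ℝ) (u : Fin p → Fin p → ℝ),
    IsEigenPairs G lam u ∧ Antitone lam ∧ ∀ k : Fin K, xi k = u (Fin.castLE hKp k)

/-- `xi` consists of the `K` leading left singular vectors of `B`,
i.e. the `K` leading eigenvectors of `B Bᵀ`. -/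
def LeadingLeftSingVecs {p n K : ℕ} (hKp : K ≤ p) (B : Matrix (Fin p) (Fin n) ℝ)
    (xi : Fin K → Fin p → ℝ) : Prop :=
  LeadingEigenvectors hKp (B * Bᵀ) xi

/-- `λ_min(S) ≥ c`, expressed through the quadratic form. -/
def lamMinGe {K : ℕ} (S : Matrix (Fin K) (Fin K) ℝ) (c : ℝ) : Prop :=
  ∀ x : Fin K → ℝ, c * ∑ k, (x k) ^ 2 ≤ x ⬝ᵥ (S *ᵥ x)

/-- The topic-topic concurrence matrix `Σ_W = n⁻¹ W W'`. -/
def SigmaW {K n : ℕ} (W : Matrix (Fin K) (Fin n) ℝ) : Matrix (Fin K) (Fin K) ℝ :=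
  (n : ℝ)⁻¹ • (W * Wᵀ)

/-- The topic-topic correlation matrix `Σ_A = A' H⁻¹ A`. -/
def SigmaA {p K : ℕ} (A : Matrix (Fin p) (Fin K) ℝ) : Matrix (Fin K) (Fin K) ℝ :=
  Aᵀ * (Matrix.diagonal fun j => (rowL1 A j)⁻¹) * A

/-- The matrix `Σ̃_A = A' M₀⁻¹ A`. -/
def SigmaAt {p K n : ℕ} (A : Matrix (Fin p) (Fin K) ℝ) (W : Matrix (Fin K) (Fin n) ℝ) :
    Matrix (Fin K) (Fin K) ℝ :=
  Aᵀ * (Matrix.diagonal fun j => (diagAvg (A * W) j)⁻¹) * A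

/-- All the singular values of the square matrix `S` are pairwise at least `c` apart. -/
def SingValGapGe {K : ℕ} (S : Matrix (Fin K) (Fin K) ℝ) (c : ℝ) : Prop :=
  ∃ (s : Fin K → ℝ) (v : Fin K → Fin K → ℝ),
    (∀ k, 0 ≤ s k) ∧ IsEigenPairs (Sᵀ * S) (fun k => (s k) ^ 2) v ∧
    ∀ k l, k ≠ l → c ≤ |s k - s l|

/-- Regularity conditions (R1)-(R2). -/
def Reg12 {p K n : ℕ} (A : Matrix (Fin p) (Fin K) ℝ) (W : Matrix (Fin K) (Fin n) ℝ)
    (c1 c2 : ℝ) : Prop :=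
  ColsProb A ∧ ColsProb W ∧ (∀ j, 0 < rowL1 A j) ∧
  lamMinGe (SigmaW W) c1 ∧ lamMinGe (SigmaA A) c1 ∧
  (∀ k l, c1 ≤ SigmaA A k l) ∧ SingValGapGe (SigmaW W * SigmaAt A W) c2

/-- `j` is an anchor word for topic `k`. -/
def IsAnchor {p K : ℕ} (A : Matrix (Fin p) (Fin K) ℝ) (j : Fin p) (k : Fin K) : Prop :=
  A j k ≠ 0 ∧ ∀ l, l ≠ k → A j l = 0

/-- Regularity condition (R3): each topic has at least `mp` anchor words, each of
frequency at least `δp`. -/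
def Reg3 {p K : ℕ} (A : Matrix (Fin p) (Fin K) ℝ) (mp : ℕ) (δp : ℝ) : Prop :=
  ∀ k, (mp ≤ Set.ncard {j | IsAnchor A j k}) ∧
    ∀ j, IsAnchor A j k → δp ≤ rowL1 A j

/-- `ã_j = a_j / h_j`: the ℓ¹-normalized `j`-th row of `A`. -/
def tildeRow {p K : ℕ} (A : Matrix (Fin p) (Fin K) ℝ) (j : Fin p) (k : Fin K) : ℝ :=
  A j k / rowL1 A j

/-- Whether `j` is a non-anchor word. -/
def NonAnchor {p K : ℕ} (A : Matrix (Fin p) (Fin K) ℝ) (j : Fin p) : Prop :=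
  ¬ ∃ k, IsAnchor A j k

/-- The k-means loss `RSS_n(L)` associated with the `ã_j` of non-anchor words. -/
def RSS {p K : ℕ} (A : Matrix (Fin p) (Fin K) ℝ) (L : ℕ) : ℝ :=
  ⨅ η : Fin L → Fin K → ℝ,
    ∑ j ∈ Finset.univ.filter (fun j => NonAnchor A j),
      ⨅ l : Fin L, ∑ k, (tildeRow A j k - η l k) ^ 2

/-- Regularity condition (R4). -/
def Reg4 {p K : ℕ} (A : Matrix (Fin p) (Fin K) ℝ) (c3 : ℝ) (L0 mp n : ℕ) : Prop :=
  (∀ j, NonAnchor A j → ∀ k : Fin K,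
      c3 ≤ enorm (fun l => tildeRow A j l - if l = k then 1 else 0)) ∧
  RSS A L0 ≤ (mp : ℝ) / Real.log n

/-- The empirical word-frequency matrix `D` built from the words `X i m` of the
`n` documents (each of length `N`). -/
def empD {p n N : ℕ} (X : Fin n → Fin N → Fin p) : Matrix (Fin p) (Fin n) ℝ :=
  Matrix.of fun j i => (N : ℝ)⁻¹ * ∑ m, if X i m = j then (1 : ℝ) else 0

/-- The pLSI sampling model: the words `X ω i m` (word `m` of document `i`) are
independent across all `(i,m)`, and word `m` of document `i` equals `j` with
probability `D0 j i`.  This is exactly the statement that the columns of the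
empirical frequency matrix are independent with `N dᵢ ~ Multinomial(N, d⁰ᵢ)`. -/
def IsPLSIWords {Ω : Type*} [MeasurableSpace Ω] (μ : Measure Ω)
    {p n N : ℕ} (D0 : Matrix (Fin p) (Fin n) ℝ)
    (X : Ω → Fin n → Fin N → Fin p) : Prop :=
  IsProbabilityMeasure μ ∧
  (∀ i m, Measurable fun ω => X ω i m) ∧
  iIndepFun (m := fun _ : Fin n × Fin N => inferInstance) (fun im ω => X ω im.1 im.2) μ ∧
  ∀ i m j, (μ {ω | X ω i m = j}).toReal = D0 j i

/-- Sign vectors (diagonal ±1 matrices). -/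
def SignVec (K : ℕ) : Type := {ω : Fin K → ℝ // ∀ k, ω k = 1 ∨ ω k = -1}

instance (K : ℕ) : Nonempty (SignVec K) := ⟨⟨fun _ => 1, fun _ => Or.inl rfl⟩⟩

/-- `Δ₁(Z, D₀) = min_{Ω ∈ O_K} max_j h_j^{-1/2} ‖Ω Ξ̂_j - Ξ_j‖`. -/
def Delta1 {p K : ℕ} (hA : Fin p → ℝ) (xihat xi : Fin K → Fin p → ℝ) : ℝ :=
  ⨅ ω : SignVec K, ⨆ j, (Real.sqrt (hA j))⁻¹ * enorm (fun k => ω.1 k * xihat k j - xi k j)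

/-- `Δ₂(Z, D₀) = max_j h_j⁻¹ |M(j,j) - M₀(j,j)|`. -/
def Delta2 {p : ℕ} (hA : Fin p → ℝ) (Md M0d : Fin p → ℝ) : ℝ :=
  ⨆ j, (hA j)⁻¹ * |Md j - M0d j|

/-- The matrix of entry-wise eigen-ratios: `R(j,t) = ξ_{t+1}(j) / ξ_1(j)`. -/
def ratioR {p K : ℕ} (xi : Fin (K + 1) → Fin p → ℝ) (j : Fin p) (t : Fin K) : ℝ :=
  xi t.succ j / xi 0 j

/-- `V*(ℓ,t) = V_{t+1}(ℓ) / V_1(ℓ)`. -/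
def VstarOf {K : ℕ} (V : Matrix (Fin (K + 1)) (Fin (K + 1)) ℝ) (l : Fin (K + 1))
    (t : Fin K) : ℝ :=
  V l t.succ / V l 0

/-- The k-means objective with centers `θ`. -/
def kmeansObj {p K L : ℕ} (r : Fin p → Fin K → ℝ) (θ : Fin L → Fin K → ℝ) : ℝ :=
  ∑ j, ⨅ l : Fin L, ∑ t, (r j t - θ l t) ^ 2

/-- Euclidean distance from `b` to the simplex with vertices `vs 0, …, vs K`. -/
def simplexDist {K : ℕ} (b : Fin K → ℝ) (vs : Fin (K + 1) → Fin K → ℝ) : ℝ :=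
  ⨅ w : {w : Fin (K + 1) → ℝ // IsProbVec w},
    enorm (fun t => b t - ∑ k, w.1 k * vs k t)

/-- The max distance of a center to the simplex spanned by the selected centers. -/
def maxSimplexDist {K L : ℕ} (θ : Fin L → Fin K → ℝ) (s : Fin (K + 1) → Fin L) : ℝ :=
  ⨆ l, simplexDist (θ l) fun k => θ (s k)

/-- Specification of the two-stage Vertices Hunting algorithm: `θ` is a global optimum
of the k-means objective with `L` clusters, and `s` selects `K+1` affinely independent
cluster centers minimizing the maximal distance of a center to their simplex. -/
def VHSpec {p K L : ℕ} (r : Fin p → Fin K → ℝ) (θ : Fin L → Fin K → ℝ)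
    (s : Fin (K + 1) → Fin L) : Prop :=
  (∀ θ' : Fin L → Fin K → ℝ, kmeansObj r θ ≤ kmeansObj r θ') ∧
  Function.Injective s ∧ AffineIndependent ℝ (fun k => θ (s k)) ∧
  ∀ s' : Fin (K + 1) → Fin L, Function.Injective s' →
    AffineIndependent ℝ (fun k => θ (s' k)) →
      maxSimplexDist θ s ≤ maxSimplexDist θ s'

/-- The barycentric-coordinates step: `π*_j` solves the linear system given by the
estimated vertices. -/
def BarySpec {p K : ℕ} (r : Fin p → Fin K → ℝ) (v : Fin (K + 1) → Fin K → ℝ)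
    (pistar : Fin p → Fin (K + 1) → ℝ) : Prop :=
  ∀ j, (∑ k, pistar j k = 1) ∧ ∀ t, ∑ k, pistar j k * v k t = r j t

/-- Truncate negative entries to zero and renormalize to unit sum. -/
def truncNorm {K : ℕ} (x : Fin K → ℝ) : Fin K → ℝ :=
  fun k => max (x k) 0 / ∑ l, max (x l) 0

/-- The final Topic-SCORE output `Â`: form `Â* = M^{1/2} diag(ξ̂₁) Π̂` and normalize each
column to unit ℓ¹-norm. -/
def AhatOf {p K : ℕ} (Ddiag : Fin p → ℝ) (xihat : Fin (K + 1) → Fin p → ℝ)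
    (pihat : Fin p → Fin (K + 1) → ℝ) : Matrix (Fin p) (Fin (K + 1)) ℝ :=
  Matrix.of fun j k =>
    (Real.sqrt (Ddiag j) * xihat 0 j * pihat j k) /
      ∑ j', |Real.sqrt (Ddiag j') * xihat 0 j' * pihat j' k|

/-- Full specification of the Topic-SCORE estimator (with `t = ∞`) applied to data `D`. -/
def TopicScoreSpec {p n K L : ℕ} (hKp : K + 1 ≤ p) (D : Matrix (Fin p) (Fin n) ℝ)
    (xihat : Fin (K + 1) → Fin p → ℝ) (θ : Fin L → Fin K → ℝ) (s : Fin (K + 1) → Fin L)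
    (pistar : Fin p → Fin (K + 1) → ℝ) (Ahat : Matrix (Fin p) (Fin (K + 1)) ℝ) : Prop :=
  LeadingLeftSingVecs hKp (nrm D (diagAvg D)) xihat ∧
  VHSpec (ratioR xihat) θ s ∧
  BarySpec (ratioR xihat) (fun k => θ (s k)) pistar ∧
  Ahat = AhatOf (diagAvg D) xihat fun j => truncNorm (pistar j)

/-- The ℓ¹ estimation loss `L(Â, A)`, minimized over permutations of the topics. -/
def TVLoss {p K : ℕ} (Ahat A : Matrix (Fin p) (Fin K) ℝ) : ℝ :=
  ⨅ κ : Equiv.Perm (Fin K), ∑ k, ∑ j, |Ahat j (κ k) - A j k|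

section BernoulliSum

variable {Ω ι : Type*} [MeasurableSpace Ω] {μ : Measure Ω}

lemma exp_mul_of_zero_or_one {y : ℝ} (hy : y = 0 ∨ y = 1) (l : ℝ) :
    exp (l * y) = 1 + (exp l - 1) * y := by
  rcases hy with rfl | rfl <;> simp

variable [IsProbabilityMeasure μ]

lemma integrable_of_zero_or_one {Y : Ω → ℝ} (hm : Measurable Y)
    (h01 : ∀ ω, Y ω = 0 ∨ Y ω = 1) : Integrable Y μ :=
  (integrable_const (1 : ℝ)).mono' hm.aestronglyMeasurable
    (ae_of_all _ fun ω => by rcases h01 ω with h | h <;> simp [h])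

lemma integrable_exp_mul_of_zero_or_one {Y : Ω → ℝ} (hm : Measurable Y)
    (h01 : ∀ ω, Y ω = 0 ∨ Y ω = 1) (l : ℝ) : Integrable (fun ω => exp (l * Y ω)) μ := by
  simp_rw [exp_mul_of_zero_or_one (h01 _)]
  exact (integrable_const 1).add ((integrable_of_zero_or_one hm h01).const_mul _)

lemma mgf_le_of_zero_or_one {Y : Ω → ℝ} (hm : Measurable Y) (h01 : ∀ ω, Y ω = 0 ∨ Y ω = 1)
    {l : ℝ} (hl : |l| ≤ 1) : mgf Y μ l ≤ exp ((l + l ^ 2) * μ[Y]) := by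
  have hmean : 0 ≤ μ[Y] := integral_nonneg fun ω => by rcases h01 ω with h | h <;> simp [h]
  have hquad : exp l - 1 ≤ l + l ^ 2 := by
    linarith [(abs_le.mp (abs_exp_sub_one_sub_id_le hl)).2]
  calc mgf Y μ l = 1 + (exp l - 1) * μ[Y] := by
        simp_rw [mgf, exp_mul_of_zero_or_one (h01 _)]
        rw [integral_add (integrable_const 1)
          ((integrable_of_zero_or_one hm h01).const_mul _), integral_const_mul]
        simp
    _ ≤ 1 + (l + l ^ 2) * μ[Y] := by gcongr
    _ ≤ exp ((l + l ^ 2) * μ[Y]) := by linarith [add_one_le_exp ((l + l ^ 2) * μ[Y])]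

variable [Fintype ι] {Y : ι → Ω → ℝ} (hm : ∀ i, Measurable (Y i))
  (h01 : ∀ i ω, Y i ω = 0 ∨ Y i ω = 1) (hind : iIndepFun Y μ)
include hm h01 hind

lemma mgf_sum_le_of_zero_or_one {l : ℝ} (hl : |l| ≤ 1) :
    mgf (∑ i, Y i) μ l ≤ exp ((l + l ^ 2) * ∑ i, μ[Y i]) := by
  rw [hind.mgf_sum hm, Finset.mul_sum, exp_sum]
  exact prod_le_prod (fun i _ => mgf_nonneg) fun i _ => mgf_le_of_zero_or_one (hm i) (h01 i) hl

lemma integrable_exp_mul_sum_of_zero_or_one (l : ℝ) :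
    Integrable (fun ω => exp (l * (∑ i, Y i) ω)) μ :=
  hind.integrable_exp_mul_sum hm fun i _ => integrable_exp_mul_of_zero_or_one (hm i) (h01 i) l

lemma measureReal_sum_ge_le {l : ℝ} (hl0 : 0 ≤ l) (hl1 : l ≤ 1) (t : ℝ) :
    μ.real {ω | ∑ i, μ[Y i] + t ≤ ∑ i, Y i ω} ≤ exp (l ^ 2 * ∑ i, μ[Y i] - l * t) := by
  have chernoff := measure_ge_le_exp_mul_mgf (∑ i, μ[Y i] + t) hl0
    (integrable_exp_mul_sum_of_zero_or_one hm h01 hind l)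
  simp only [Finset.sum_apply] at chernoff
  calc _ ≤ _ := chernoff
    _ ≤ exp (-l * (∑ i, μ[Y i] + t)) * exp ((l + l ^ 2) * ∑ i, μ[Y i]) := by
        gcongr
        exact mgf_sum_le_of_zero_or_one hm h01 hind (abs_le.2 ⟨by linarith, hl1⟩)
    _ = _ := by rw [← exp_add]; ring_nf

lemma measureReal_sum_le_le {l : ℝ} (hl0 : 0 ≤ l) (hl1 : l ≤ 1) (t : ℝ) :
    μ.real {ω | ∑ i, Y i ω ≤ ∑ i, μ[Y i] - t} ≤ exp (l ^ 2 * ∑ i, μ[Y i] - l * t) := by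
  have chernoff := measure_le_le_exp_mul_mgf (∑ i, μ[Y i] - t) (neg_nonpos.2 hl0)
    (integrable_exp_mul_sum_of_zero_or_one hm h01 hind (-l))
  simp only [Finset.sum_apply] at chernoff
  calc _ ≤ _ := chernoff
    _ ≤ exp (-(-l) * (∑ i, μ[Y i] - t)) * exp ((-l + (-l) ^ 2) * ∑ i, μ[Y i]) := by
        gcongr
        exact mgf_sum_le_of_zero_or_one hm h01 hind (abs_le.2 ⟨by linarith, by linarith⟩)
    _ = _ := by rw [← exp_add]; ring_nf

lemma measureReal_abs_sum_sub_ge_le {V t : ℝ} (hV : 0 < V) (hPV : ∑ i, μ[Y i] ≤ V)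
    (ht0 : 0 ≤ t) (htV : t ≤ 2 * V) :
    μ.real {ω | t ≤ |∑ i, Y i ω - ∑ i, μ[Y i]|} ≤ 2 * exp (-(t ^ 2 / (4 * V))) := by
  set P := ∑ i, μ[Y i]
  set l := t / (2 * V)
  have hl0 : 0 ≤ l := by positivity
  have hl1 : l ≤ 1 := (div_le_one (by positivity)).2 htV
  -- `l = t / (2 V)` minimizes `l ^ 2 * V - l * t`
  have hexp : exp (l ^ 2 * P - l * t) ≤ exp (-(t ^ 2 / (4 * V))) := by
    gcongr
    calc l ^ 2 * P - l * t ≤ l ^ 2 * V - l * t := by gcongr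
      _ = -(t ^ 2 / (4 * V)) := by simp only [l]; field_simp; ring
  have hsplit : {ω | t ≤ |∑ i, Y i ω - P|} ⊆
      {ω | P + t ≤ ∑ i, Y i ω} ∪ {ω | ∑ i, Y i ω ≤ P - t} := by
    rintro ω (hω : t ≤ |∑ i, Y i ω - P|)
    rcases le_abs'.1 hω with h | h
    · exact Or.inr (show _ ≤ P - t by linarith)
    · exact Or.inl (show P + t ≤ _ by linarith)
  calc _ ≤ _ := (measureReal_mono hsplit).trans (measureReal_union_le _ _)
    _ ≤ exp (-(t ^ 2 / (4 * V))) + exp (-(t ^ 2 / (4 * V))) := by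
        gcongr
        · exact (measureReal_sum_ge_le hm h01 hind hl0 hl1 t).trans hexp
        · exact (measureReal_sum_le_le hm h01 hind hl0 hl1 t).trans hexp
    _ = _ := by ring

end BernoulliSum

lemma one_sub_measureReal_forall_le_sum {Ω β : Type*} [MeasurableSpace Ω] {μ : Measure Ω}
    [IsProbabilityMeasure μ] [Fintype β] (P : β → Ω → Prop) :
    1 - μ.real {ω | ∀ j, P j ω} ≤ ∑ j, μ.real {ω | ¬ P j ω} := by
  set E := {ω | ∀ j, P j ω}
  have hcompl : Eᶜ = ⋃ j, {ω | ¬ P j ω} := by ext; simp [E]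
  have hcover : 1 ≤ μ.real E + μ.real Eᶜ := by
    rw [← probReal_univ (μ := μ), ← Set.union_compl_self E]
    exact measureReal_union_le _ _
  have hunion : μ.real Eᶜ ≤ ∑ j, μ.real {ω | ¬ P j ω} :=
    hcompl ▸ measureReal_iUnion_fintype_le _
  linarith

lemma mul_apply_le_rowL1 {p K n : ℕ} (A : Matrix (Fin p) (Fin K) ℝ) {W : Matrix (Fin K) (Fin n) ℝ}
    (hW : ColsProb W) (j : Fin p) (i : Fin n) : (A * W) j i ≤ rowL1 A j := by
  rw [Matrix.mul_apply, rowL1]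
  gcongr with k
  have hWki : W k i ≤ 1 :=
    (hW i).2 ▸ single_le_sum (fun k' _ => (hW i).1 k') (mem_univ k)
  calc A j k * W k i ≤ |A j k| * W k i := by gcongr; exacts [(hW i).1 k, le_abs_self _]
    _ ≤ |A j k| := mul_le_of_le_one_right (abs_nonneg _) hWki

section Words

variable {p n N : ℕ}

def wordIndicator (X : Fin n → Fin N → Fin p) (j : Fin p) (im : Fin n × Fin N) : ℝ :=
  if X im.1 im.2 = j then 1 else 0

lemma natCast_mul_diagAvg_empD (hN : N ≠ 0) (hn : n ≠ 0) (X : Fin n → Fin N → Fin p)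
    (j : Fin p) : ((N : ℝ) * n) * diagAvg (empD X) j = ∑ im, wordIndicator X j im := by
  simp only [diagAvg, empD, Matrix.of_apply, wordIndicator, Fintype.sum_prod_type, mul_sum]
  field_simp

lemma natCast_mul_diagAvg (hn : n ≠ 0) (D0 : Matrix (Fin p) (Fin n) ℝ) (j : Fin p) :
    ((N : ℝ) * n) * diagAvg D0 j = ∑ im : Fin n × Fin N, D0 j im.1 := by
  simp only [diagAvg, Fintype.sum_prod_type, sum_const, card_univ, Fintype.card_fin,
    nsmul_eq_mul, ← mul_sum]
  field_simp

variable {Ω : Type*} [MeasurableSpace Ω] {μ : Measure Ω} {D0 : Matrix (Fin p) (Fin n) ℝ}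
  {X : Ω → Fin n → Fin N → Fin p}

lemma integral_wordIndicator (hX : IsPLSIWords μ D0 X) (j : Fin p) (im : Fin n × Fin N) :
    μ[fun ω => wordIndicator (X ω) j im] = D0 j im.1 := by
  have hS : MeasurableSet {ω | X ω im.1 im.2 = j} := hX.2.1 im.1 im.2 (measurableSet_singleton j)
  have hind : (fun ω => wordIndicator (X ω) j im) = {ω | X ω im.1 im.2 = j}.indicator 1 := by
    ext ω; simp [wordIndicator, Set.indicator_apply]
  rw [hind, integral_indicator_one hS, measureReal_def]
  exact hX.2.2.2 im.1 im.2 j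

lemma measureReal_le_natCast_mul_abs_diagAvg_sub_le (hX : IsPLSIWords μ D0 X) (j : Fin p)
    {h t : ℝ} (hD0 : ∀ i, D0 j i ≤ h) (hV : 0 < N * n * h) (ht0 : 0 ≤ t)
    (htV : t ≤ 2 * (N * n * h)) :
    μ.real {ω | t ≤ ((N : ℝ) * n) * |diagAvg (empD (X ω)) j - diagAvg D0 j|} ≤
      2 * exp (-(t ^ 2 / (4 * (N * n * h)))) := by
  have := hX.1
  have hN : N ≠ 0 := by rintro rfl; simp at hV
  have hn : n ≠ 0 := by rintro rfl; simp at hV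
  have hY01 : ∀ im ω, wordIndicator (X ω) j im = 0 ∨ wordIndicator (X ω) j im = 1 := by
    intro im ω; unfold wordIndicator; split_ifs <;> simp
  have hYm : ∀ im, Measurable fun ω => wordIndicator (X ω) j im := fun im =>
    (measurable_of_countable fun x : Fin p => if x = j then (1 : ℝ) else 0).comp
      (hX.2.1 im.1 im.2)
  have hYind : iIndepFun (fun im ω => wordIndicator (X ω) j im) μ :=
    hX.2.2.1.comp (fun _ x => if x = j then (1 : ℝ) else 0) fun _ => measurable_of_countable _
  have hmean : ∑ im, μ[fun ω => wordIndicator (X ω) j im] = ∑ im : Fin n × Fin N, D0 j im.1 := by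
    simp only [integral_wordIndicator hX]
  have hdev : ∀ ω, ((N : ℝ) * n) * |diagAvg (empD (X ω)) j - diagAvg D0 j| =
      |∑ im, wordIndicator (X ω) j im - ∑ im, μ[fun ω => wordIndicator (X ω) j im]| := by
    intro ω
    rw [hmean, ← natCast_mul_diagAvg_empD hN hn, ← natCast_mul_diagAvg hn, ← mul_sub, abs_mul,
      abs_of_nonneg (a := (N : ℝ) * n) (by positivity)]
  have hPV : ∑ im, μ[fun ω => wordIndicator (X ω) j im] ≤ N * n * h := by
    calc _ = ∑ im : Fin n × Fin N, D0 j im.1 := hmean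
      _ ≤ ∑ _im : Fin n × Fin N, h := sum_le_sum fun im _ => hD0 im.1
      _ = N * n * h := by
        rw [sum_const, card_univ, Fintype.card_prod, Fintype.card_fin, Fintype.card_fin,
          nsmul_eq_mul]
        push_cast; ring
  simp_rw [hdev]
  exact measureReal_abs_sum_sub_ge_le hYm hY01 hYind hV hPV ht0 htV

end Words

lemma measureReal_not_abs_diagAvg_sub_le_le {Ω : Type*} [MeasurableSpace Ω] {μ : Measure Ω}
    {p K n N : ℕ} {A : Matrix (Fin p) (Fin K) ℝ} {W : Matrix (Fin K) (Fin n) ℝ}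
    {X : Ω → Fin n → Fin N → Fin p} (hX : IsPLSIWords μ (A * W) X) (hW : ColsProb W)
    (j : Fin p) (hn : 1 < n) (hlog : 9 * log n ≤ N * n * rowL1 A j) :
    μ.real {ω | ¬ |diagAvg (empD (X ω)) j - diagAvg (A * W) j| ≤
      6 * (√((N : ℝ) * n))⁻¹ * √(rowL1 A j * log n)} ≤ 2 * ((n : ℝ) ^ 9)⁻¹ := by
  have := hX.1
  set V := (N : ℝ) * n * rowL1 A j
  set t := 6 * √(V * log n)
  have hlogpos : 0 < log n := log_pos (by exact_mod_cast hn)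
  have hV : 0 < V := by linarith
  have ht2 : t ^ 2 = 36 * (V * log n) := by
    rw [mul_pow, sq_sqrt (by positivity)]; norm_num
  have htV : t ≤ 2 * V := by nlinarith [sqrt_nonneg (V * log n)]
  have hscale : (N : ℝ) * n * (6 * (√((N : ℝ) * n))⁻¹ * √(rowL1 A j * log n)) = t := by
    rw [show (N : ℝ) * n * (6 * (√((N : ℝ) * n))⁻¹ * √(rowL1 A j * log n)) =
      6 * ((N * n / √((N : ℝ) * n)) * √(rowL1 A j * log n)) by ring, div_sqrt,
      ← sqrt_mul (by positivity), ← mul_assoc]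
  have hsub : {ω | ¬ |diagAvg (empD (X ω)) j - diagAvg (A * W) j| ≤
      6 * (√((N : ℝ) * n))⁻¹ * √(rowL1 A j * log n)} ⊆
      {ω | t ≤ ((N : ℝ) * n) * |diagAvg (empD (X ω)) j - diagAvg (A * W) j|} := by
    rintro ω (hω : ¬ _ ≤ _)
    show t ≤ _
    rw [← hscale]
    gcongr
    exact (not_le.1 hω).le
  have hexp : exp (-(t ^ 2 / (4 * V))) = ((n : ℝ) ^ 9)⁻¹ := by
    rw [ht2, show 36 * (V * log n) / (4 * V) = log ((n : ℝ) ^ 9) by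
      rw [log_pow]; field_simp; push_cast; ring, exp_neg, exp_log (by positivity)]
  calc _ ≤ _ := measureReal_mono hsub
    _ ≤ 2 * exp (-(t ^ 2 / (4 * V))) :=
      measureReal_le_natCast_mul_abs_diagAvg_sub_le hX j (mul_apply_le_rowL1 A hW j) hV
        (by positivity) htV
    _ = _ := by rw [hexp]

theorem statement_16_general (K : ℕ) :
    ∃ C : ℝ, 0 < C ∧
      ∀ (N p : ℕ → ℕ)
        (A : ∀ n : ℕ, Matrix (Fin (p n)) (Fin (K + 1)) ℝ)
        (W : ∀ n : ℕ, Matrix (Fin (K + 1)) (Fin n) ℝ)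
        (Ω : ℕ → Type) (mΩ : ∀ n, MeasurableSpace (Ω n)) (μ : ∀ n, Measure (Ω n))
        (X : ∀ n : ℕ, Ω n → Fin n → Fin (N n) → Fin (p n)),
        (∀ n, K + 1 ≤ p n) → (∀ n, 0 < N n) →
        (∀ n, N n ≤ n ∧ p n ≤ n) →
        (∀ n, ColsProb (A n)) → (∀ n, ColsProb (W n)) →
        (∀ n, ∀ j, 0 < rowL1 (A n) j) →
        (∀ n, IsPLSIWords (μ n) (A n * W n) (X n)) →
        -- N n h_min / log n → ∞
        Tendsto (fun n : ℕ =>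
          (N n : ℝ) * n * (⨅ j, rowL1 (A n) j) / Real.log n) atTop atTop →
        Tendsto (fun n : ℕ => (n : ℝ) ^ 3 *
          (1 - (μ n {ω | ∀ j,
            |diagAvg (empD (X n ω)) j - diagAvg (A n * W n) j| ≤
              C * (Real.sqrt ((N n : ℝ) * n))⁻¹ *
                Real.sqrt (rowL1 (A n) j * Real.log n)}).toReal))
          atTop (nhds 0) := by
  refine ⟨6, by norm_num, ?_⟩
  intro N p A W Ω _ μ X _ _ hnp _ hW _ hX hT
  have hdecay : Tendsto (fun n : ℕ => 2 / (n : ℝ) ^ 5) atTop (nhds 0) :=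
    tendsto_const_nhds.div_atTop
      ((tendsto_pow_atTop (by norm_num)).comp tendsto_natCast_atTop_atTop)
  refine tendsto_of_tendsto_of_tendsto_of_le_of_le' tendsto_const_nhds hdecay ?_ ?_
  · filter_upwards with n
    have := (hX n).1
    exact mul_nonneg (by positivity) (sub_nonneg.2 measureReal_le_one)
  filter_upwards [hT.eventually_ge_atTop 9, eventually_gt_atTop 1] with n hT9 hn
  have := (hX n).1
  have hlog : ∀ j, 9 * log n ≤ N n * n * rowL1 (A n) j := fun j => by
    have hmin : ⨅ j, rowL1 (A n) j ≤ rowL1 (A n) j :=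
      ciInf_le ⟨0, by rintro _ ⟨k, rfl⟩; exact sum_nonneg fun _ _ => abs_nonneg _⟩ j
    calc 9 * log n ≤ N n * n * ⨅ j, rowL1 (A n) j :=
          (le_div_iff₀ (log_pos (by exact_mod_cast hn))).1 hT9
      _ ≤ N n * n * rowL1 (A n) j := by gcongr
  calc (n : ℝ) ^ 3 * (1 - (μ n).real _)
      ≤ (n : ℝ) ^ 3 * ∑ j : Fin (p n), 2 * ((n : ℝ) ^ 9)⁻¹ := by
        gcongr
        refine (one_sub_measureReal_forall_le_sum _).trans (sum_le_sum fun j _ => ?_)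
        exact measureReal_not_abs_diagAvg_sub_le_le (hX n) (hW n) j hn (hlog j)
    _ ≤ (n : ℝ) ^ 3 * (n * (2 * ((n : ℝ) ^ 9)⁻¹)) := by
        rw [sum_const, card_univ, Fintype.card_fin, nsmul_eq_mul]
        gcongr
        exact_mod_cast (hnp n).2
    _ = 2 / (n : ℝ) ^ 5 := by field_simp

/-- Lemma: concentration of the diagonal normalization matrix `M`. -/
theorem statement_16 (K : ℕ) (hK : 1 ≤ K) :
    ∃ C : ℝ, 0 < C ∧
      ∀ (N p : ℕ → ℕ)
        (A : ∀ n : ℕ, Matrix (Fin (p n)) (Fin (K + 1)) ℝ)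
        (W : ∀ n : ℕ, Matrix (Fin (K + 1)) (Fin n) ℝ)
        (Ω : ℕ → Type) (mΩ : ∀ n, MeasurableSpace (Ω n)) (μ : ∀ n, Measure (Ω n))
        (X : ∀ n : ℕ, Ω n → Fin n → Fin (N n) → Fin (p n)),
        (∀ n, K + 1 ≤ p n) → (∀ n, 0 < N n) →
        (∀ n, N n ≤ n ∧ p n ≤ n) →
        (∀ n, ColsProb (A n)) → (∀ n, ColsProb (W n)) →
        (∀ n, ∀ j, 0 < rowL1 (A n) j) →
        (∀ n, IsPLSIWords (μ n) (A n * W n) (X n)) →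
        -- N n h_min / log n → ∞
        Tendsto (fun n : ℕ =>
          (N n : ℝ) * n * (⨅ j, rowL1 (A n) j) / Real.log n) atTop atTop →
        Tendsto (fun n : ℕ => (n : ℝ) ^ 3 *
          (1 - (μ n {ω | ∀ j,
            |diagAvg (empD (X n ω)) j - diagAvg (A n * W n) j| ≤
              C * (Real.sqrt ((N n : ℝ) * n))⁻¹ *
                Real.sqrt (rowL1 (A n) j * Real.log n)}).toReal))
          atTop (nhds 0) :=
  statement_16_general K

end TopicModel
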